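/- arXiv:1704.05932 — 2 statements merged into one kernel-verified Lean document; each statement's English description precedes it below -/
import Mathlib

section
/- The set of (ℤ/2)-characteristic matrices over P₀⁴(8) whose first four columns form the 4×4 identity matrix is exactly the seven-element set {a₁, a₂, a₃, a₄, a₅, a₆, a₇}: each aᵢ satisfies the nonsingularity condition at all twenty vertices in V₀, and every 4×8 matrix over ℤ/2 with identity first block satisfying the nonsingularity condition equals one of a₁,…,a₇. -/
open Matrix

def V0 : List (Fin 4 → Fin 8) :=
  [![0,1,2,3], ![0,1,2,7], ![0,1,3,4], ![0,1,4,5], ![0,1,5,6], ![0,1,6,7], ![0,2,3,4], ![0,2,4,5], ![0,2,5,6], ![0,2,6,7], ![1,2,3,7], ![1,3,4,6], ![1,3,6,7], ![1,4,5,6], ![2,3,4,7], ![2,4,5,7], ![2,5,6,7], ![3,4,5,6], ![3,4,5,7], ![3,5,6,7]]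
def a1 : Matrix (Fin 4) (Fin 8) (ZMod 2) :=
  !![1, 0, 0, 0, 1, 0, 0, 1;
    0, 1, 0, 0, 1, 0, 1, 0;
    0, 0, 1, 0, 1, 1, 1, 0;
    0, 0, 0, 1, 0, 1, 0, 1]
def a2 : Matrix (Fin 4) (Fin 8) (ZMod 2) :=
  !![1, 0, 0, 0, 1, 0, 0, 1;
    0, 1, 0, 0, 1, 0, 1, 0;
    0, 0, 1, 0, 1, 1, 1, 1;
    0, 0, 0, 1, 0, 1, 0, 1]
def a3 : Matrix (Fin 4) (Fin 8) (ZMod 2) :=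
  !![1, 0, 0, 0, 0, 0, 1, 1;
    0, 1, 0, 0, 1, 0, 1, 0;
    0, 0, 1, 0, 1, 1, 1, 0;
    0, 0, 0, 1, 0, 1, 0, 1]
def a4 : Matrix (Fin 4) (Fin 8) (ZMod 2) :=
  !![1, 0, 0, 0, 0, 0, 1, 1;
    0, 1, 0, 0, 1, 0, 1, 0;
    0, 0, 1, 0, 1, 1, 0, 1;
    0, 0, 0, 1, 0, 1, 1, 1]
def a5 : Matrix (Fin 4) (Fin 8) (ZMod 2) :=
  !![1, 0, 0, 0, 0, 0, 1, 1;
    0, 1, 0, 0, 1, 1, 0, 1;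
    0, 0, 1, 0, 1, 0, 1, 0;
    0, 0, 0, 1, 0, 1, 1, 1]
def a6 : Matrix (Fin 4) (Fin 8) (ZMod 2) :=
  !![1, 0, 0, 0, 0, 0, 1, 1;
    0, 1, 0, 0, 1, 1, 1, 1;
    0, 0, 1, 0, 1, 0, 1, 0;
    0, 0, 0, 1, 0, 1, 0, 1]
def a7 : Matrix (Fin 4) (Fin 8) (ZMod 2) :=
  !![1, 0, 0, 0, 0, 1, 1, 1;
    0, 1, 0, 0, 1, 1, 0, 1;
    0, 0, 1, 0, 1, 1, 1, 0;
    0, 0, 0, 1, 1, 0, 1, 1]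

/-! Fixing the first block leaves `Λ = [1 | B]` with sixteen free entries. Filling in the
columns of `B` one at a time, the vertices whose largest facet is `4 + l` involve only the first
`l + 1` columns of `B`, so their determinants can be tested as soon as those columns are chosen.
This prunes the `2 ^ 16` candidates to a search small enough for the kernel to run by evaluation,
and exactly `a₁, …, a₇` survive it. -/

section Det4

variable {R : Type*} [CommRing R]

-- The kernel evaluates this expansion quickly, unlike `Matrix.det`, a sum over permutations.
def det4 (A : Matrix (Fin 4) (Fin 4) R) : R :=
    A 0 0 * (A 1 1 * (A 2 2 * A 3 3 - A 2 3 * A 3 2)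
           - A 1 2 * (A 2 1 * A 3 3 - A 2 3 * A 3 1)
           + A 1 3 * (A 2 1 * A 3 2 - A 2 2 * A 3 1))
  - A 0 1 * (A 1 0 * (A 2 2 * A 3 3 - A 2 3 * A 3 2)
           - A 1 2 * (A 2 0 * A 3 3 - A 2 3 * A 3 0)
           + A 1 3 * (A 2 0 * A 3 2 - A 2 2 * A 3 0))
  + A 0 2 * (A 1 0 * (A 2 1 * A 3 3 - A 2 3 * A 3 1)
           - A 1 1 * (A 2 0 * A 3 3 - A 2 3 * A 3 0)
           + A 1 3 * (A 2 0 * A 3 1 - A 2 1 * A 3 0))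
  - A 0 3 * (A 1 0 * (A 2 1 * A 3 2 - A 2 2 * A 3 1)
           - A 1 1 * (A 2 0 * A 3 2 - A 2 2 * A 3 0)
           + A 1 2 * (A 2 0 * A 3 1 - A 2 1 * A 3 0))

theorem det_eq_det4 (A : Matrix (Fin 4) (Fin 4) R) : A.det = det4 A := by
  simp [det4, det_succ_row_zero, Fin.sum_univ_succ, Fin.succAbove]
  ring

end Det4

section IdAppend

variable {R : Type*} [Zero R] [One R] {m n : ℕ}

def idAppend (B : Matrix (Fin m) (Fin n) R) : Matrix (Fin m) (Fin (m + n)) R :=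
  of fun i => Fin.append ((1 : Matrix (Fin m) (Fin m) R) i) (B i)

@[simp]
theorem idAppend_apply_castAdd (B : Matrix (Fin m) (Fin n) R) (i j : Fin m) :
    idAppend B i (Fin.castAdd n j) = (1 : Matrix (Fin m) (Fin m) R) i j := by
  simp [idAppend]

@[simp]
theorem idAppend_apply_natAdd (B : Matrix (Fin m) (Fin n) R) (i : Fin m) (l : Fin n) :
    idAppend B i (Fin.natAdd m l) = B i l := by
  simp [idAppend]

theorem eq_idAppend_of_submatrix_castAdd {Λ : Matrix (Fin m) (Fin (m + n)) R}
    (h : Λ.submatrix id (Fin.castAdd n) = 1) : Λ = idAppend (Λ.submatrix id (Fin.natAdd m)) := by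
  ext i j
  induction j using Fin.addCases with
  | left j => simpa using congrFun (congrFun h i) j
  | right l => simp

theorem idAppend_apply_eq_of_le {B B' : Matrix (Fin m) (Fin n) R} {k : Fin n}
    (h : ∀ i, ∀ l ≤ k, B i l = B' i l) (i : Fin m) {j : Fin (m + n)} (hj : j ≤ Fin.natAdd m k) :
    idAppend B i j = idAppend B' i j := by
  induction j using Fin.addCases with
  | left j => simp
  | right l => simpa using h i l (by simpa using hj)

end IdAppend

section NonsingularAt

variable {m : ℕ}

def NonsingularAt (V : List (Fin 4 → Fin m)) (Λ : Matrix (Fin 4) (Fin m) (ZMod 2)) : Prop :=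
  ∀ v ∈ V, IsUnit (Λ.submatrix id v).det

instance (V : List (Fin 4 → Fin m)) (Λ : Matrix (Fin 4) (Fin m) (ZMod 2)) :
    Decidable (NonsingularAt V Λ) :=
  decidable_of_iff (V.Forall fun v => det4 (Λ.submatrix id v) = 1) <| by
    simp only [NonsingularAt, List.forall_iff_forall_mem, det_eq_det4, isUnit_iff_eq_one]

theorem NonsingularAt.filter_sup_eq [NeZero m] {V : List (Fin 4 → Fin m)}
    {Λ Λ' : Matrix (Fin 4) (Fin m) (ZMod 2)} (h : NonsingularAt V Λ) (k : Fin m)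
    (hΛ : ∀ i j, j ≤ k → Λ i j = Λ' i j) :
    NonsingularAt (V.filter fun v => Finset.univ.sup v = k) Λ' := by
  intro v hv
  obtain ⟨hvV, hvk⟩ := List.mem_filter.mp hv
  have hsub : Λ.submatrix id v = Λ'.submatrix id v := by
    ext i j
    exact hΛ i (v j) (of_decide_eq_true hvk ▸ Finset.le_sup (Finset.mem_univ j))
  exact hsub ▸ h v hvV

end NonsingularAt

noncomputable def verticesWithLast (k : Fin 8) : List (Fin 4 → Fin 8) :=
  V0.filter fun v => Finset.univ.sup v = k

set_option synthInstance.maxSize 1000 in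
theorem idAppend_mem_of_nonsingularAt_verticesWithLast :
    ∀ c₄, NonsingularAt (verticesWithLast 4) (idAppend (of ![c₄, 0, 0, 0])ᵀ) →
    ∀ c₅, NonsingularAt (verticesWithLast 5) (idAppend (of ![c₄, c₅, 0, 0])ᵀ) →
    ∀ c₆, NonsingularAt (verticesWithLast 6) (idAppend (of ![c₄, c₅, c₆, 0])ᵀ) →
    ∀ c₇, NonsingularAt (verticesWithLast 7) (idAppend (of ![c₄, c₅, c₆, c₇])ᵀ) →
    idAppend (of ![c₄, c₅, c₆, c₇])ᵀ ∈ [a1, a2, a3, a4, a5, a6, a7] := by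
  decide +kernel

/-- The (ℤ/2)-characteristic matrices over P₀⁴(8) with identity first block are
exactly a₁,…,a₇. -/
theorem stmt0 (Λ : Matrix (Fin 4) (Fin 8) (ZMod 2)) :
    (Λ.submatrix id (Fin.castLE (by omega : (4:ℕ) ≤ 8)) = 1 ∧
      ∀ v ∈ V0, IsUnit (Λ.submatrix id v).det) ↔
    (Λ = a1 ∨ Λ = a2 ∨ Λ = a3 ∨ Λ = a4 ∨ Λ = a5 ∨ Λ = a6 ∨ Λ = a7) := by
  constructor
  · rintro ⟨hid, hv⟩
    obtain ⟨B, rfl⟩ : ∃ B : Matrix (Fin 4) (Fin 4) (ZMod 2), Λ = idAppend B :=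
      ⟨_, eq_idAppend_of_submatrix_castAdd (m := 4) (n := 4) hid⟩
    obtain ⟨c₄, c₅, c₆, c₇, rfl⟩ : ∃ c₄ c₅ c₆ c₇, B = (of ![c₄, c₅, c₆, c₇])ᵀ :=
      ⟨Bᵀ 0, Bᵀ 1, Bᵀ 2, Bᵀ 3, by ext i l; fin_cases l <;> rfl⟩
    have stage : ∀ (k : Fin 4) (d : Fin 4 → Fin 4 → ZMod 2),
        (∀ l ≤ k, ![c₄, c₅, c₆, c₇] l = d l) →
        NonsingularAt (verticesWithLast (Fin.natAdd 4 k)) (idAppend (of d)ᵀ) := fun k _ h =>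
      NonsingularAt.filter_sup_eq hv _ (idAppend_apply_eq_of_le fun i l hl => congrFun (h l hl) i)
    simpa using idAppend_mem_of_nonsingularAt_verticesWithLast
      c₄ (stage 0 _ fun l hl => by fin_cases l <;> simp_all)
      c₅ (stage 1 _ fun l hl => by fin_cases l <;> simp_all)
      c₆ (stage 2 _ fun l hl => by fin_cases l <;> simp_all)
      c₇ (stage 3 _ fun _ _ => rfl)
  · rintro (rfl | rfl | rfl | rfl | rfl | rfl | rfl) <;>
      exact ⟨by decide +kernel, (by decide +kernel : NonsingularAt V0 _)⟩
end

section
/- Let n, m be natural numbers with m ≥ 2, and let V be a collection of n-element subsets of {0,…,m−1} such that every 2-element subset of {0,…,m−1} is contained in some member of V. If there exists an n×m matrix Λ over ℤ/2 such that for every v ∈ V the n×n submatrix of Λ formed by the columns indexed by v is invertible, then m ≤ 2ⁿ − 1. Equivalently, if m ≥ 2ⁿ then no such matrix exists. -/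
/-- If a collection V of n-element subsets of Fin m covers all pairs, and some
n×m matrix over ℤ/2 has invertible submatrix (linearly independent columns)
on every member of V, then m ≤ 2ⁿ − 1. -/
theorem stmt12 (n m : ℕ) (hm : 2 ≤ m) (V : Finset (Finset (Fin m)))
    (hcard : ∀ v ∈ V, v.card = n)
    (hpair : ∀ i j : Fin m, i ≠ j → ∃ v ∈ V, i ∈ v ∧ j ∈ v)
    (Λ : Matrix (Fin n) (Fin m) (ZMod 2))
    (hns : ∀ v ∈ V, LinearIndependent (ZMod 2)
      (fun j : {x // x ∈ v} => fun i : Fin n => Λ i j.1)) :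
    m ≤ 2 ^ n - 1 := by
  set f : Fin m → (Fin n → ZMod 2) := fun j i => Λ i j with hf
  -- distinct columns
  have hinj : Function.Injective f := by
    intro i j hij
    by_contra hne
    obtain ⟨v, hv, hiv, hjv⟩ := hpair i j hne
    have h := hns v hv
    have := h.injective (a₁ := ⟨i, hiv⟩) (a₂ := ⟨j, hjv⟩) hij
    exact hne (Subtype.mk_eq_mk.mp this)
  -- nonzero columns
  have hnz : ∀ j, f j ≠ 0 := by
    intro j
    have : Nontrivial (Fin m) := Fin.nontrivial_iff_two_le.mpr hm
    obtain ⟨k, hk⟩ := exists_ne j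
    obtain ⟨v, hv, hkv, hjv⟩ := hpair k j hk
    have h := hns v hv
    exact h.ne_zero ⟨j, hjv⟩
  -- inject into nonzero vectors
  let g : Fin m → {x : Fin n → ZMod 2 // x ≠ 0} := fun j => ⟨f j, hnz j⟩
  have hginj : Function.Injective g := fun a b h =>
    hinj (Subtype.mk_eq_mk.mp h)
  have hle := Fintype.card_le_of_injective g hginj
  have hc : Fintype.card {x : Fin n → ZMod 2 // x ≠ 0} = 2 ^ n - 1 := by
    have := Fintype.card_subtype_compl (p := fun x : Fin n → ZMod 2 => x = 0)
    rw [Fintype.card_subtype_eq (0 : Fin n → ZMod 2)] at this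
    have h2 : Fintype.card (Fin n → ZMod 2) = 2 ^ n := by simp
    rw [h2] at this
    exact this
  simpa [hc] using hle
end
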